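/- arXiv:math/0506539 — 4 statements merged into one kernel-verified Lean document; each statement's English description precedes it below -/
import Mathlib

section
/- With the same module as above, the commutation relation [E₊, E₋] v_n = [2(j−n)]_{p,q} v_n holds for all n ∈ ℕ, where [x]_{p,q} = (q^x − p^{−x})/(q − p⁻¹). Equivalently, the scalar identity a_{n+1}² − a_n² = [2(j−n)]_{p,q} holds, where a_n² = (q^{2j−n+1}[n]_q − p^{−2j+n−1}[n]_p)/(q − p⁻¹) and a_0 = 0. -/
lemma auxq (q Q : ℂ) (hq : q ≠ 0) (hQ : Q ≠ 0) (h : q - q⁻¹ ≠ 0) :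
    Q⁻¹ * ((q * Q - Q⁻¹ * q⁻¹) / (q - q⁻¹)) - q * Q⁻¹ * ((Q - Q⁻¹) / (q - q⁻¹))
      = Q⁻¹ * Q⁻¹ := by
  rw [mul_div_assoc', mul_div_assoc', ← sub_div, div_eq_iff h]
  field_simp
  ring

lemma auxp (p P : ℂ) (hp : p ≠ 0) (hP : P ≠ 0) (h : p - p⁻¹ ≠ 0) :
    P * ((p * P - P⁻¹ * p⁻¹) / (p - p⁻¹)) - P * p⁻¹ * ((P - P⁻¹) / (p - p⁻¹))
      = P * P := by
  rw [mul_div_assoc', mul_div_assoc', ← sub_div, div_eq_iff h]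
  field_simp
  ring

/-- On the Verma-type module for `U_{p,q}[sl(2)]`, `[E₊, E₋] v_n = [2(j-n)]_{p,q} v_n`,
equivalently the scalar identity `a_{n+1}² - a_n² = [2(j-n)]_{p,q}` where
`a_n² = (q^{2j-n+1}[n]_q - p^{-2j+n-1}[n]_p)/(q - p⁻¹)` and `qj, pj` stand for the
(fixed) values of `q^j, p^j`, so that `q^{2j-n+1} = qj² q^{1-n}`,
`p^{-2j+n-1} = pj⁻² p^{n-1}` and `[2(j-n)]_{p,q} = (qj² q^{-2n} - pj⁻² p^{2n})/(q - p⁻¹)`. -/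
theorem comm_Eplus_Eminus (p q : ℂ) (hp : p ≠ 0) (hq : q ≠ 0) (hpq : q ≠ p⁻¹)
    (hq2 : q ^ 2 ≠ 1) (hp2 : p ^ 2 ≠ 1) (hpq1 : p * q ≠ 1)
    (qj pj : ℂ) (hqj : qj ≠ 0) (hpj : pj ≠ 0)
    (A : ℕ → ℂ)
    (hA : ∀ n : ℕ, A n =
      (qj ^ 2 * q ^ (1 - (n : ℤ)) * ((q ^ (n : ℤ) - q ^ (-(n : ℤ))) / (q - q⁻¹))
        - pj⁻¹ ^ 2 * p ^ ((n : ℤ) - 1) * ((p ^ (n : ℤ) - p ^ (-(n : ℤ))) / (p - p⁻¹)))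
      / (q - p⁻¹)) :
    ∀ n : ℕ, A (n + 1) - A n =
      (qj ^ 2 * q ^ (-2 * (n : ℤ)) - pj⁻¹ ^ 2 * p ^ (2 * (n : ℤ))) / (q - p⁻¹) := by
  have hq' : q - q⁻¹ ≠ 0 := by
    rw [sub_ne_zero]
    intro h
    apply hq2
    field_simp at h
    exact h
  have hp' : p - p⁻¹ ≠ 0 := by
    rw [sub_ne_zero]
    intro h
    apply hp2
    field_simp at h
    exact h
  have hpq' : q - p⁻¹ ≠ 0 := sub_ne_zero.mpr hpq
  intro n
  rw [hA, hA]
  push_cast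
  simp only [show (1 : ℤ) - ((n : ℤ) + 1) = -n from by ring,
    show ((n : ℤ) + 1) - 1 = (n : ℤ) from by ring,
    show (-2 : ℤ) * n = -n + -n from by ring,
    show (2 : ℤ) * n = (n : ℤ) + n from by ring,
    show -((n : ℤ) + 1) = -n + -1 from by ring]
  simp only [zpow_add₀ hq, zpow_add₀ hp, zpow_sub₀ hq, zpow_sub₀ hp, zpow_neg, zpow_one]
  have hQ : q ^ (n : ℤ) ≠ 0 := zpow_ne_zero _ hq
  have hP : p ^ (n : ℤ) ≠ 0 := zpow_ne_zero _ hp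
  generalize q ^ (n : ℤ) = Q at hQ ⊢
  generalize p ^ (n : ℤ) = P at hP ⊢
  rw [div_sub_div_same]
  congr 1
  linear_combination qj ^ 2 * auxq q Q hq hQ hq' - pj⁻¹ ^ 2 * auxp p P hp hP hp'
end

section
/- On the Verma-type module for U_{p,q}[sl(2)] with basis v_n, n ∈ ℕ, the Casimir operator C = (1/(1−q^{−2})) q^{2H} − (1/(1−p²)) p^{−2H} + (q − p⁻¹) E₋E₊ acts as the scalar (1/(1−q^{−2})) q^{2j} − (1/(1−p²)) p^{−2j} on every basis vector v_n; equivalently, the scalar identity (1/(1−q^{−2})) q^{2(j−n)} − (1/(1−p²)) p^{−2(j−n)} + (q − p⁻¹) a_n² = (1/(1−q^{−2})) q^{2j} − (1/(1−p²)) p^{−2j} holds for all n ∈ ℕ. -/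
lemma keyq (q c X : ℂ) (hq : q ≠ 0) (hq2 : q ^ 2 ≠ 1) (hX : X ≠ 0) :
    c * (X ^ 2)⁻¹ / (1 - (q ^ 2)⁻¹) + c * (q * X⁻¹) * ((X - X⁻¹) / (q - q⁻¹))
      = c / (1 - (q ^ 2)⁻¹) := by
  have h1 : q ^ 2 - 1 ≠ 0 := sub_ne_zero.mpr hq2
  have hqq : q - q⁻¹ ≠ 0 := by
    intro h
    apply h1
    have := sub_eq_zero.mp h
    field_simp at this
    linear_combination this
  have h2 : (1 : ℂ) - (q ^ 2)⁻¹ ≠ 0 := by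
    intro h
    apply h1
    have := sub_eq_zero.mp h
    rw [eq_comm, inv_eq_one] at this
    linear_combination this
  have e1 : (1:ℂ) - (q ^ 2)⁻¹ = (q ^ 2 - 1) / q ^ 2 := by field_simp
  have e2 : q - q⁻¹ = (q ^ 2 - 1) / q := by field_simp
  rw [e1, e2]
  field_simp
  ring

lemma keyp (p c Y : ℂ) (hp : p ≠ 0) (hp2 : p ^ 2 ≠ 1) (hY : Y ≠ 0) :
    c * Y ^ 2 / (1 - p ^ 2) + c * (Y * p⁻¹) * ((Y - Y⁻¹) / (p - p⁻¹))
      = c / (1 - p ^ 2) := by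
  have h1 : (1 : ℂ) - p ^ 2 ≠ 0 := sub_ne_zero.mpr (Ne.symm hp2)
  have hpp : p - p⁻¹ ≠ 0 := by
    intro h
    apply hp2
    have := sub_eq_zero.mp h
    field_simp at this
    linear_combination this
  have h1' : p ^ 2 - 1 ≠ 0 := sub_ne_zero.mpr hp2
  have e2 : p - p⁻¹ = (p ^ 2 - 1) / p := by field_simp
  rw [e2]
  field_simp
  ring

/-- On the Verma-type module for `U_{p,q}[sl(2)]`, the Casimir operator
`C = (1/(1-q^{-2})) q^{2H} - (1/(1-p²)) p^{-2H} + (q - p⁻¹) E₋E₊` acts as the scalar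
`(1/(1-q^{-2})) q^{2j} - (1/(1-p²)) p^{-2j}` on every basis vector `v_n`; equivalently
`(1/(1-q^{-2})) q^{2(j-n)} - (1/(1-p²)) p^{-2(j-n)} + (q - p⁻¹) a_n²
  = (1/(1-q^{-2})) q^{2j} - (1/(1-p²)) p^{-2j}` for all `n ∈ ℕ`.
Here `qj, pj` are fixed values of `q^j, p^j`, so `q^{2(j-n)} = qj² q^{-2n}`,
`p^{-2(j-n)} = pj⁻² p^{2n}`, and
`a_n² = (q^{2j-n+1}[n]_q - p^{-2j+n-1}[n]_p)/(q - p⁻¹)` with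
`[n]_x = (x^n - x^{-n})/(x - x⁻¹)`. -/
theorem casimir_scalar (p q : ℂ) (hp : p ≠ 0) (hq : q ≠ 0) (hpq : q ≠ p⁻¹)
    (hq2 : q ^ 2 ≠ 1) (hp2 : p ^ 2 ≠ 1)
    (qj pj : ℂ) (hqj : qj ≠ 0) (hpj : pj ≠ 0)
    (A : ℕ → ℂ) (hA0 : A 0 = 0)
    (hA : ∀ n : ℕ, A n =
      (qj ^ 2 * q ^ (1 - (n : ℤ)) * ((q ^ (n : ℤ) - q ^ (-(n : ℤ))) / (q - q⁻¹))
        - pj⁻¹ ^ 2 * p ^ ((n : ℤ) - 1) * ((p ^ (n : ℤ) - p ^ (-(n : ℤ))) / (p - p⁻¹)))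
      / (q - p⁻¹)) :
    ∀ n : ℕ,
      (1 / (1 - q ^ (-2 : ℤ))) * (qj ^ 2 * q ^ (-2 * (n : ℤ)))
        - (1 / (1 - p ^ 2)) * (pj⁻¹ ^ 2 * p ^ (2 * (n : ℤ)))
        + (q - p⁻¹) * A n
      = (1 / (1 - q ^ (-2 : ℤ))) * qj ^ 2 - (1 / (1 - p ^ 2)) * pj⁻¹ ^ 2 := by
  intro n
  have hqp : q - p⁻¹ ≠ 0 := sub_ne_zero.mpr hpq
  rw [hA n, mul_comm (q - p⁻¹), div_mul_cancel₀ _ hqp]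
  rw [show (-2 * (n:ℤ)) = -(2*n) by ring, show ((n:ℤ) - 1) = (n:ℤ) + (-1) by ring,
    show (1 - (n:ℤ)) = 1 + (-(n:ℤ)) by ring, show ((-2 : ℤ)) = -(2:ℤ) by norm_num]
  rw [zpow_add₀ hq, zpow_add₀ hp, zpow_neg, zpow_neg, zpow_neg, zpow_neg, zpow_neg, zpow_one,
    zpow_one]
  rw [zpow_natCast, zpow_natCast, show ((2:ℤ)*n) = ((n*2 : ℕ) : ℤ) by push_cast; ring,
    zpow_natCast, zpow_natCast, show ((2:ℤ)) = ((2:ℕ):ℤ) by norm_num, zpow_natCast,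
    pow_mul, pow_mul]
  have hX : q ^ n ≠ 0 := pow_ne_zero _ hq
  have hY : p ^ n ≠ 0 := pow_ne_zero _ hp
  generalize q ^ n = X at hX ⊢
  generalize p ^ n = Y at hY ⊢
  linear_combination keyq q (qj ^ 2) X hq hq2 hX - keyp p (pj⁻¹ ^ 2) Y hp hp2 hY
end

section
/- The Casimir element C = (1/(1−q^{−2})) k_q² − (1/(1−p²)) k_p^{−2} + (q − p⁻¹) E₋E₊ commutes with H, E₊, E₋ in the algebra U_{p,q}[sl(2)] defined by [H, E±] = ±E±, [E₊, E₋] = (q^{2H} − p^{−2H})/(q − p⁻¹), where k_q = q^H, k_p^{−1} = p^{−H} satisfy k_q E± k_q^{−1} = q^{±1} E± and k_p E± k_p^{−1} = p^{±1} E±. -/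
/-- In the associative algebra `U_{p,q}[sl(2)]` generated by `E₊, E₋` and invertible
`k_q = q^H`, `k_p = p^H` with relations `k_q E± k_q⁻¹ = q^{±1} E±`,
`k_p E± k_p⁻¹ = p^{±1} E±`, `k_q k_p = k_p k_q`,
`[E₊, E₋] = (k_q² - k_p⁻²)/(q - p⁻¹)`, the Casimir element
`C = (1/(1-q^{-2})) k_q² - (1/(1-p²)) k_p⁻² + (q - p⁻¹) E₋E₊`
commutes with `E₊`, `E₋`, `k_q` and `k_p`. -/
theorem casimir_central {A : Type*} [Ring A] [Algebra ℂ A]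
    (p q : ℂ) (hp : p ≠ 0) (hq : q ≠ 0) (hpq : q ≠ p⁻¹)
    (hq2 : q ^ 2 ≠ 1) (hp2 : p ^ 2 ≠ 1)
    (Ep Em kq kp kq' kp' : A)
    (hkq : kq * kq' = 1) (hkq' : kq' * kq = 1)
    (hkp : kp * kp' = 1) (hkp' : kp' * kp = 1)
    (hkqkp : kq * kp = kp * kq)
    (hqEp : kq * Ep = q • (Ep * kq)) (hqEm : kq * Em = q⁻¹ • (Em * kq))
    (hpEp : kp * Ep = p • (Ep * kp)) (hpEm : kp * Em = p⁻¹ • (Em * kp))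
    (hEE : Ep * Em - Em * Ep = (q - p⁻¹)⁻¹ • (kq ^ 2 - kp' ^ 2)) :
    let C : A := (1 / (1 - q⁻¹ ^ 2)) • kq ^ 2 - (1 / (1 - p ^ 2)) • kp' ^ 2
                  + (q - p⁻¹) • (Em * Ep)
    C * Ep = Ep * C ∧ C * Em = Em * C ∧ C * kq = kq * C ∧ C * kp = kp * C := by
  intro C
  have hC : C = (1 / (1 - q⁻¹ ^ 2)) • kq ^ 2 - (1 / (1 - p ^ 2)) • kp' ^ 2
      + (q - p⁻¹) • (Em * Ep) := rfl
  have hqp : q - p⁻¹ ≠ 0 := sub_ne_zero.mpr hpq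
  have haq : (1 : ℂ) - q⁻¹ ^ 2 ≠ 0 := by
    intro h
    apply hq2
    have h1 : (q ^ 2)⁻¹ = 1 := by rw [← inv_pow]; linear_combination -h
    rwa [inv_eq_one] at h1
  have hbp : (1 : ℂ) - p ^ 2 ≠ 0 := by
    intro h; apply hp2; linear_combination -h
  -- kp' relations
  have hqp1 : q * p - 1 ≠ 0 := by
    intro h
    apply hpq
    have h1 : q * p = 1 := by linear_combination h
    field_simp
    linear_combination h1
  have hq21 : q ^ 2 - 1 ≠ 0 := sub_ne_zero.mpr hq2
  have hp21 : p ^ 2 - 1 ≠ 0 := sub_ne_zero.mpr hp2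
  have hD : (-p ^ 3 + p ^ 4 * q + (p ^ 5 - p ^ 6 * q)) ≠ 0 := by
    have h := mul_ne_zero (mul_ne_zero hqp1 (pow_ne_zero 3 hp)) hbp
    intro h0
    apply h
    linear_combination h0
  have hp'Ep : kp' * Ep = p⁻¹ • (Ep * kp') := by
    have h : Ep * kp' = p • (kp' * Ep) := by
      calc Ep * kp' = kp' * (kp * Ep) * kp' := by
            rw [← mul_assoc, hkp', one_mul]
        _ = p • (kp' * Ep) := by
            rw [hpEp, mul_smul_comm, smul_mul_assoc, mul_assoc, mul_assoc Ep kp kp', hkp, mul_one]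
    rw [h, smul_smul, inv_mul_cancel₀ hp, one_smul]
  have hp'Em : kp' * Em = p • (Em * kp') := by
    have h : Em * kp' = p⁻¹ • (kp' * Em) := by
      calc Em * kp' = kp' * (kp * Em) * kp' := by
            rw [← mul_assoc, hkp', one_mul]
        _ = p⁻¹ • (kp' * Em) := by
            rw [hpEm, mul_smul_comm, smul_mul_assoc, mul_assoc, mul_assoc Em kp kp', hkp, mul_one]
    rw [h, smul_smul, mul_inv_cancel₀ hp, one_smul]
  -- squared relations
  have hq2Ep : kq ^ 2 * Ep = (q * q) • (Ep * kq ^ 2) := by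
    rw [sq, mul_assoc, hqEp, mul_smul_comm, ← mul_assoc, hqEp, smul_mul_assoc,
        smul_smul, mul_assoc]
  have hq2Em : kq ^ 2 * Em = (q⁻¹ * q⁻¹) • (Em * kq ^ 2) := by
    rw [sq, mul_assoc, hqEm, mul_smul_comm, ← mul_assoc, hqEm, smul_mul_assoc,
        smul_smul, mul_assoc]
  have hp2Ep : kp' ^ 2 * Ep = (p⁻¹ * p⁻¹) • (Ep * kp' ^ 2) := by
    rw [sq, mul_assoc, hp'Ep, mul_smul_comm, ← mul_assoc, hp'Ep, smul_mul_assoc,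
        smul_smul, mul_assoc]
  have hp2Em : kp' ^ 2 * Em = (p * p) • (Em * kp' ^ 2) := by
    rw [sq, mul_assoc, hp'Em, mul_smul_comm, ← mul_assoc, hp'Em, smul_mul_assoc,
        smul_smul, mul_assoc]
  have hEpEm : Ep * Em = Em * Ep + (q - p⁻¹)⁻¹ • (kq ^ 2 - kp' ^ 2) := by
    linear_combination (norm := module) hEE
  refine ⟨?_, ?_, ?_, ?_⟩
  · rw [hC, add_mul, sub_mul, mul_add, mul_sub, smul_mul_assoc, smul_mul_assoc,
        smul_mul_assoc, mul_smul_comm, mul_smul_comm, mul_smul_comm,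
        hq2Ep, hp2Ep, ← mul_assoc Ep Em Ep, hEpEm, add_mul, smul_mul_assoc,
        sub_mul, hq2Ep, hp2Ep, smul_sub]
    match_scalars <;>
      simp only [mul_one, mul_neg, neg_mul, ← mul_assoc, mul_inv_cancel₀ hqp, one_mul] <;>
      (try ring1) <;> field_simp [hp, hq, haq, hbp] <;> ring1
  · rw [hC, add_mul, sub_mul, mul_add, mul_sub, smul_mul_assoc, smul_mul_assoc,
        smul_mul_assoc, mul_smul_comm, mul_smul_comm, mul_smul_comm,
        hq2Em, hp2Em, mul_assoc Em Ep Em, hEpEm, mul_add, mul_smul_comm,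
        mul_sub]
    match_scalars <;>
      simp only [mul_one, mul_neg, neg_mul, ← mul_assoc, mul_inv_cancel₀ hqp, one_mul] <;>
      (try ring1) <;> field_simp [hp, hq, haq, hbp] <;> ring1
  · have hkqkp' : kq * kp' = kp' * kq := by
      calc kq * kp' = kp' * (kp * kq) * kp' := by
            rw [← mul_assoc kp' kp kq, hkp', one_mul]
        _ = kp' * (kq * kp) * kp' := by rw [hkqkp]
        _ = kp' * kq := by rw [mul_assoc, mul_assoc kq kp kp', hkp, mul_one]
    have h1 : kq * kq ^ 2 = kq ^ 2 * kq := by rw [sq, mul_assoc]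
    have h2 : kq * kp' ^ 2 = kp' ^ 2 * kq := by
      rw [sq, ← mul_assoc, hkqkp', mul_assoc, hkqkp', ← mul_assoc]
    have h3 : kq * (Em * Ep) = Em * Ep * kq := by
      rw [← mul_assoc, hqEm, smul_mul_assoc, mul_assoc, hqEp, mul_smul_comm,
          smul_smul, inv_mul_cancel₀ hq, one_smul, ← mul_assoc]
    rw [hC, add_mul, sub_mul, mul_add, mul_sub, smul_mul_assoc, smul_mul_assoc,
        smul_mul_assoc, mul_smul_comm, mul_smul_comm, mul_smul_comm, h1, h2, h3]
  · have h1 : kp * kq ^ 2 = kq ^ 2 * kp := by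
      rw [sq, ← mul_assoc, ← hkqkp, mul_assoc, ← hkqkp, ← mul_assoc]
    have h2 : kp * kp' ^ 2 = kp' ^ 2 * kp := by
      rw [sq, ← mul_assoc, hkp, one_mul, mul_assoc, hkp', mul_one]
    have h3 : kp * (Em * Ep) = Em * Ep * kp := by
      rw [← mul_assoc, hpEm, smul_mul_assoc, mul_assoc, hpEp, mul_smul_comm,
          smul_smul, inv_mul_cancel₀ hp, one_smul, ← mul_assoc]
    rw [hC, add_mul, sub_mul, mul_add, mul_sub, smul_mul_assoc, smul_mul_assoc,
        smul_mul_assoc, mul_smul_comm, mul_smul_comm, mul_smul_comm, h1, h2, h3]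
end

section
/- There exist real p, q > 1 with p ≠ q and a half-integer j > 0 such that the truncation equation q^{2j−x}[x+1]_q = p^{−2j+x}[x+1]_p has no solution x ∈ ℕ; hence the highest-weight representation (with coefficients a_{n}² = (q^{2j−n+1}[n]_q − p^{−2j+n−1}[n]_p)/(q − p⁻¹)) is infinite-dimensional even for half-integral spin. For example, take j = 1/2 and p, q > 1 with [D]_p/[D]_q ≠ (pq)^{2−D} for all integers D ≥ 1. -/
/-- There exist real `p, q > 1` with `p ≠ q` and a half-integer `j > 0` such that
the truncation equation `q^{2j-x}[x+1]_q = p^{-2j+x}[x+1]_p` has no solution `x ∈ ℕ`;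
hence the highest-weight representation is infinite-dimensional even for half-integral
spin.  Here `[n]_x = (x^n - x^{-n})/(x - x⁻¹)` and real powers are `rpow`. -/
theorem exists_infinite_dimensional_half_integral_spin :
    ∃ p q : ℝ, 1 < p ∧ 1 < q ∧ p ≠ q ∧
    ∃ j : ℝ, 0 < j ∧ (∃ m : ℕ, 2 * j = (m : ℝ)) ∧
      ∀ x : ℕ,
        q ^ (2 * j - (x : ℝ)) * ((q ^ ((x : ℤ) + 1) - q ^ (-((x : ℤ) + 1))) / (q - q⁻¹))
          ≠ p ^ (-(2 * j) + (x : ℝ)) * ((p ^ ((x : ℤ) + 1) - p ^ (-((x : ℤ) + 1))) / (p - p⁻¹)) := by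
  refine ⟨3, 2, by norm_num, by norm_num, by norm_num, 1/2, by norm_num, ⟨1, by norm_num⟩, ?_⟩
  intro x
  have h2j : (2 : ℝ) * (1/2) = 1 := by norm_num
  rw [h2j]
  -- convert the rpow's to zpow's
  have hq : (2 : ℝ) ^ ((1 : ℝ) - (x : ℝ)) = (2 : ℝ) ^ ((1 : ℤ) - (x : ℤ)) := by
    rw [show (1 : ℝ) - (x : ℝ) = (((1 : ℤ) - (x : ℤ) : ℤ) : ℝ) by push_cast; ring,
      Real.rpow_intCast]
  have hp : (3 : ℝ) ^ (-(1 : ℝ) + (x : ℝ)) = (3 : ℝ) ^ ((x : ℤ) - 1) := by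
    rw [show -(1 : ℝ) + (x : ℝ) = (((x : ℤ) - 1 : ℤ) : ℝ) by push_cast; ring,
      Real.rpow_intCast]
  rw [hq, hp]
  have h2 : (2 : ℝ) ≠ 0 := by norm_num
  have h3 : (3 : ℝ) ≠ 0 := by norm_num
  have hL : (2 : ℝ) ^ ((1 : ℤ) - (x : ℤ)) * ((2:ℝ) ^ ((x : ℤ) + 1) - 2 ^ (-((x : ℤ) + 1)))
      = 4 - (2:ℝ) ^ (-(2 * (x : ℤ))) := by
    rw [mul_sub, ← zpow_add₀ h2, ← zpow_add₀ h2,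
      show (1 : ℤ) - (x : ℤ) + ((x : ℤ) + 1) = 2 by ring,
      show (1 : ℤ) - (x : ℤ) + -((x : ℤ) + 1) = -(2 * (x : ℤ)) by ring]
    norm_num
  have hR : (3 : ℝ) ^ ((x : ℤ) - 1) * ((3:ℝ) ^ ((x : ℤ) + 1) - 3 ^ (-((x : ℤ) + 1)))
      = (3:ℝ) ^ (2 * (x : ℤ)) - 1/9 := by
    rw [mul_sub, ← zpow_add₀ h3, ← zpow_add₀ h3,
      show (x : ℤ) - 1 + ((x : ℤ) + 1) = 2 * (x : ℤ) by ring,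
      show (x : ℤ) - 1 + -((x : ℤ) + 1) = -2 by ring]
    norm_num
  rw [← mul_div_assoc, ← mul_div_assoc, hL, hR]
  rcases Nat.eq_zero_or_pos x with hx | hx
  · subst hx; norm_num
  · -- x ≥ 1 : LHS < 8/3 < 10/3 ≤ RHS
    have hpos : (0 : ℝ) < (2:ℝ) ^ (-(2 * (x : ℤ))) := by positivity
    have h9 : (9 : ℝ) ≤ (3:ℝ) ^ (2 * (x : ℤ)) := by
      have h := zpow_le_zpow_right₀ (by norm_num : (1:ℝ) ≤ 3)
        (by omega : (2:ℤ) ≤ 2 * (x : ℤ))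
      calc (9:ℝ) = (3:ℝ) ^ (2:ℤ) := by norm_num
        _ ≤ _ := h
    intro h
    have hlt : (4 - (2:ℝ) ^ (-(2 * (x : ℤ)))) / (2 - 2⁻¹)
        < ((3:ℝ) ^ (2 * (x : ℤ)) - 1/9) / (3 - 3⁻¹) := by
      have : (4 - (2:ℝ) ^ (-(2 * (x : ℤ)))) / (2 - 2⁻¹) < 8/3 := by
        rw [div_lt_iff₀ (by norm_num)]; nlinarith
      have h2' : (10:ℝ)/3 ≤ ((3:ℝ) ^ (2 * (x : ℤ)) - 1/9) / (3 - 3⁻¹) := by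
        rw [le_div_iff₀ (by norm_num)]; nlinarith
      linarith
    exact absurd h (ne_of_lt hlt)
end
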